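/- If there exists a binary linear [47,15,16]-code whose maximum codeword weight is 32, then there exists a binary linear [48,16,16]-code. -/

import Mathlib

lemma snoc47 (c : Fin 47 → ZMod 2) (a : ZMod 2) :
    (Fin.snoc c a : Fin 48 → ZMod 2) 47 = a := Fin.snoc_last (α := fun _ => ZMod 2) (p := c) (x := a)

noncomputable def extL : (Fin 47 → ZMod 2) →ₗ[ZMod 2] (Fin 48 → ZMod 2) where
  toFun c := Fin.snoc c 0
  map_add' c d := by
    funext i
    refine Fin.lastCases ?_ ?_ i <;> simp [Fin.snoc_last, Fin.snoc_castSucc, snoc47]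
  map_smul' a c := by
    funext i
    refine Fin.lastCases ?_ ?_ i <;> simp [Fin.snoc_last, Fin.snoc_castSucc, snoc47]

lemma extL_inj : Function.Injective extL := by
  intro c d h
  have : Fin.init (extL c) = Fin.init (extL d) := by rw [h]
  simpa [extL, Fin.init_snoc] using this

lemma norm_snoc (c : Fin 47 → ZMod 2) :
    hammingNorm (Fin.snoc c (0:ZMod 2) : Fin 48 → ZMod 2) = hammingNorm c := by
  simp only [hammingNorm, Finset.card_filter]
  rw [Fin.sum_univ_castSucc]
  simp [Fin.snoc_last, Fin.snoc_castSucc, snoc47]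

lemma zmod2_cases (a : ZMod 2) : a = 0 ∨ a = 1 := by revert a; decide

lemma norm_add_one (x : Fin 48 → ZMod 2) :
    hammingNorm (x + 1) = 48 - hammingNorm x := by
  have key : ∀ i, (x + 1) i ≠ 0 ↔ ¬ (x i ≠ 0) := by
    intro i
    rcases zmod2_cases (x i) with h | h <;> simp [h]; decide
  simp only [hammingNorm]
  have : (Finset.univ.filter fun i => (x+1) i ≠ 0)
      = Finset.univ \ (Finset.univ.filter fun i => x i ≠ 0) := by
    rw [← Finset.filter_not]
    exact Finset.filter_congr fun i _ => key i
  rw [this, Finset.card_sdiff_of_subset (Finset.filter_subset _ _)]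
  simp

/-- If there exists a binary linear [47,15,16]-code with maximum codeword
weight 32, then there exists a binary linear [48,16,16]-code. -/
theorem stmt_10
    (h : ∃ C : Submodule (ZMod 2) (Fin 47 → ZMod 2),
      Module.finrank (ZMod 2) C = 15 ∧
      (∀ c ∈ C, c ≠ 0 → 16 ≤ hammingNorm c) ∧
      (∃ c ∈ C, c ≠ 0 ∧ hammingNorm c = 16) ∧
      (∀ c ∈ C, hammingNorm c ≤ 32) ∧
      (∃ c ∈ C, hammingNorm c = 32)) :
    ∃ D : Submodule (ZMod 2) (Fin 48 → ZMod 2),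
      Module.finrank (ZMod 2) D = 16 ∧
      (∀ c ∈ D, c ≠ 0 → 16 ≤ hammingNorm c) ∧
      (∃ c ∈ D, c ≠ 0 ∧ hammingNorm c = 16) := by
  obtain ⟨C, hrk, hmin, ⟨c16, hc16C, hc16ne, hc16⟩, hmax, -⟩ := h
  set M := C.map extL with hM
  refine ⟨M ⊔ Submodule.span (ZMod 2) {(1 : Fin 48 → ZMod 2)}, ?_, ?_, ?_⟩
  · -- rank
    have hone_ne : (1 : Fin 48 → ZMod 2) ≠ 0 := by
      intro h; have := congrFun h 0; simp at this
    have hone_not : (1 : Fin 48 → ZMod 2) ∉ M := by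
      rintro ⟨c, -, hc⟩
      have := congrFun hc (Fin.last 47)
      simp [extL, Fin.snoc_last, snoc47] at this
    have hinf : M ⊓ Submodule.span (ZMod 2) {(1 : Fin 48 → ZMod 2)} = ⊥ := by
      rw [Submodule.eq_bot_iff]
      rintro x ⟨hxM, hxS⟩
      obtain ⟨a, rfl⟩ := Submodule.mem_span_singleton.mp hxS
      rcases zmod2_cases a with rfl | rfl
      · simp
      · exfalso; apply hone_not; simpa using hxM
    have hMrk : Module.finrank (ZMod 2) M = 15 := by
      rw [hM]
      rw [← hrk]
      exact LinearEquiv.finrank_eq (Submodule.equivMapOfInjective extL extL_inj C).symm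
    have hsum := Submodule.finrank_sup_add_finrank_inf_eq M
      (Submodule.span (ZMod 2) {(1 : Fin 48 → ZMod 2)})
    rw [hinf, hMrk, finrank_span_singleton hone_ne] at hsum
    simpa using hsum
  · -- min weight
    intro d hd hdne
    obtain ⟨m, hmM, y, hyS, rfl⟩ := Submodule.mem_sup.mp hd
    obtain ⟨c, hcC, rfl⟩ := hmM
    obtain ⟨a, rfl⟩ := Submodule.mem_span_singleton.mp hyS
    rcases zmod2_cases a with rfl | rfl
    · simp only [zero_smul, add_zero] at hdne ⊢
      have hcne : c ≠ 0 := by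
        rintro rfl; simp at hdne
      have : hammingNorm (extL c) = hammingNorm c := norm_snoc c
      rw [this]
      exact hmin c hcC hcne
    · have h1 : ((1 : ZMod 2) • (1 : Fin 48 → ZMod 2)) = 1 := one_smul _ _
      rw [h1]
      have : hammingNorm (extL c + 1) = 48 - hammingNorm (extL c) := norm_add_one _
      rw [this]
      have : hammingNorm (extL c) ≤ 32 := by
        rw [show hammingNorm (extL c) = hammingNorm c from norm_snoc c]
        exact hmax c hcC
      omega
  · -- existence of weight 16
    refine ⟨extL c16, ?_, ?_, ?_⟩
    · exact Submodule.mem_sup_left ⟨c16, hc16C, rfl⟩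
    · intro h
      exact hc16ne (extL_inj (by simpa using h))
    · rw [show hammingNorm (extL c16) = hammingNorm c16 from norm_snoc c16]
      exact hc16
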